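/- On a path under strict preferences, if object o_l is reachable for agent k with l ≤ k, then there is a sequence of rational swaps ending in an assignment σ_t with σ_t(k) = o_l in which no agent i with i < l ever participates in a swap (equivalently, σ_t(i) = σ_0(i) for all i < l). -/

import Mathlib

/-- An assignment maps agents to objects bijectively (agents and objects are both `Fin n`;
object `o_i` is identified with index `i`, agent `i` initially holds `o_i`). -/
abbrev Assignment (n : ℕ) := Equiv.Perm (Fin n)

/-- `u j o` is agent `j`'s utility for object `o`; strict linear preferences mean each `u j`
is injective, and `o ≻_j o'` iff `u j o > u j o'`. -/
def StrictPref {n : ℕ} (u : Fin n → Fin n → ℕ) : Prop := ∀ j, Function.Injective (u j)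

/-- A rational swap under strict preferences: two adjacent agents exchange objects, each
strictly preferring the object received. -/
def SwapStep {n : ℕ} (adj : Fin n → Fin n → Prop) (u : Fin n → Fin n → ℕ)
    (σ σ' : Assignment n) : Prop :=
  ∃ a b : Fin n, adj a b ∧ u a (σ b) > u a (σ a) ∧ u b (σ a) > u b (σ b) ∧
    σ' = σ * Equiv.swap a b

/-- `σseq 0, σseq 1, …, σseq t` is a sequence of swaps. -/
def SwapSeq {n : ℕ} (adj : Fin n → Fin n → Prop) (u : Fin n → Fin n → ℕ)
    (σseq : ℕ → Assignment n) (t : ℕ) : Prop :=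
  ∀ m < t, SwapStep adj u (σseq m) (σseq (m + 1))

/-- Adjacency of the path `0 – 1 – ⋯ – (n-1)`. -/
def pathAdj {n : ℕ} (i j : Fin n) : Prop := i.val + 1 = j.val ∨ j.val + 1 = i.val

/-- Object `o` is reachable for agent `k` from the identity endowment. -/
def ReachableObj {n : ℕ} (adj : Fin n → Fin n → Prop) (u : Fin n → Fin n → ℕ)
    (k o : Fin n) : Prop :=
  ∃ t σseq, σseq 0 = 1 ∧ SwapSeq adj u σseq t ∧ σseq t k = o

/-!
Along a sequence of rational swaps every agent's utility only grows, so under strict preferences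
an agent never gets back an object it has given away. On a path an object moves one agent at a
time, so its trajectory never revisits an agent and is therefore monotone; as `o_l` starts at `l`
and ends at `k ≥ l`, it only ever moves right. Hence no swap exchanges the holder of `o_l` with
the agent to its left: each swap lies entirely to the right of `o_l`'s current position or
entirely to its left. The swaps on the right, performed alone, are still rational (the agents
involved hold the same objects as before), end with `k` holding `o_l`, and never involve an
agent `i < l`.
-/

open Equiv Relation

lemma monotoneOn_Iic_of_le_succ {α : Type*} [Preorder α] {f : ℕ → α} {T : ℕ}
    (hf : ∀ m < T, f m ≤ f (m + 1)) : MonotoneOn f (Set.Iic T) :=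
  monotoneOn_of_le_succ Set.ordConnected_Iic fun m _ _ hm ↦ hf m (by simpa using hm)

lemma exists_apply_eq_of_succ_le_add_one {f : ℕ → ℕ} {a b c : ℕ} (hab : a ≤ b)
    (hf : ∀ m, a ≤ m → m < b → f (m + 1) ≤ f m + 1) (hac : f a ≤ c) (hcb : c ≤ f b) :
    ∃ s, a ≤ s ∧ s ≤ b ∧ f s = c := by
  induction b, hab using Nat.le_induction with
  | base => exact ⟨a, le_rfl, le_rfl, by omega⟩
  | succ b hab ih =>
    by_cases hc : c ≤ f b
    · obtain ⟨s, has, hsb, hs⟩ := ih (fun m h₁ h₂ ↦ hf m h₁ (by omega)) hc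
      exact ⟨s, has, by omega, hs⟩
    · exact ⟨b + 1, by omega, le_rfl, by have := hf b hab (by omega); omega⟩

lemma le_succ_of_no_return {f : ℕ → ℕ} {T : ℕ}
    (hstep : ∀ m < T, f (m + 1) ≤ f m + 1 ∧ f m ≤ f (m + 1) + 1)
    (hret : ∀ m₁ m₂ m₃, m₁ ≤ m₂ → m₂ ≤ m₃ → m₃ ≤ T → f m₁ = f m₃ → f m₂ = f m₁)
    (hT : f 0 ≤ f T) : ∀ m < T, f m ≤ f (m + 1) := by
  intro m hm
  by_contra! hlt
  rcases le_or_gt (f 0) (f (m + 1)) with h₀ | h₀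
  · obtain ⟨s, -, hsm, hs⟩ := exists_apply_eq_of_succ_le_add_one (Nat.zero_le m)
      (fun i _ hi ↦ (hstep i (by omega)).1) h₀ hlt.le
    have := hret s m (m + 1) hsm m.le_succ hm hs
    omega
  · obtain ⟨s, hms, hsT, hs⟩ := exists_apply_eq_of_succ_le_add_one (c := f m) hm
      (fun i _ hi ↦ (hstep i hi).1) hlt.le (by have := (hstep m hm).2; omega)
    have := hret m (m + 1) s m.le_succ hms hsT hs.symm
    omega

variable {n : ℕ} {adj : Fin n → Fin n → Prop} {u : Fin n → Fin n → ℕ}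
  {σ : ℕ → Assignment n} {T : ℕ}

lemma SwapStep.utility_le {σ σ' : Assignment n} (h : SwapStep adj u σ σ') (c : Fin n) :
    u c (σ c) ≤ u c (σ' c) := by
  obtain ⟨a, b, -, ha, hb, rfl⟩ := h
  rw [Perm.mul_apply, swap_apply_def]
  split_ifs with hca hcb
  · exact hca ▸ ha.le
  · exact hcb ▸ hb.le
  · rfl

lemma SwapSeq.utility_monotoneOn (h : SwapSeq adj u σ T) (c : Fin n) :
    MonotoneOn (fun m ↦ u c (σ m c)) (Set.Iic T) :=
  monotoneOn_Iic_of_le_succ fun m hm ↦ (h m hm).utility_le c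

lemma SwapSeq.apply_eq_of_apply_eq (hu : StrictPref u) (h : SwapSeq adj u σ T) {c : Fin n}
    {m₁ m₂ m₃ : ℕ} (h₁₂ : m₁ ≤ m₂) (h₂₃ : m₂ ≤ m₃) (h₃ : m₃ ≤ T) (he : σ m₁ c = σ m₃ c) :
    σ m₂ c = σ m₁ c := by
  have hmono := h.utility_monotoneOn c
  refine hu c (le_antisymm ?_ (hmono (h₁₂.trans (h₂₃.trans h₃)) (h₂₃.trans h₃) h₁₂))
  rw [he]
  exact hmono (h₂₃.trans h₃) h₃ h₂₃

lemma SwapSeq.inv_apply_eq_of_inv_apply_eq (hu : StrictPref u) (h : SwapSeq adj u σ T)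
    {x : Fin n} {m₁ m₂ m₃ : ℕ} (h₁₂ : m₁ ≤ m₂) (h₂₃ : m₂ ≤ m₃) (h₃ : m₃ ≤ T)
    (he : (σ m₁)⁻¹ x = (σ m₃)⁻¹ x) : (σ m₂)⁻¹ x = (σ m₁)⁻¹ x := by
  have hx₃ : σ m₃ ((σ m₁)⁻¹ x) = x := by rw [he]; simp
  rw [Perm.inv_eq_iff_eq, h.apply_eq_of_apply_eq hu h₁₂ h₂₃ h₃ (by simpa using hx₃.symm)]
  simp

lemma swap_apply_val_le_of_pathAdj {a b : Fin n} (h : pathAdj a b) (y : Fin n) :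
    (swap a b y).val ≤ y.val + 1 := by
  unfold pathAdj at h
  rw [swap_apply_def]
  split_ifs <;> subst_vars <;> omega

lemma SwapStep.inv_apply_val_le {σ σ' : Assignment n} (h : SwapStep pathAdj u σ σ')
    (x : Fin n) : (σ'⁻¹ x).val ≤ (σ⁻¹ x).val + 1 ∧ (σ⁻¹ x).val ≤ (σ'⁻¹ x).val + 1 := by
  obtain ⟨a, b, hab, -, -, rfl⟩ := h
  rw [mul_inv_rev, swap_inv, Perm.mul_apply]
  exact ⟨swap_apply_val_le_of_pathAdj hab _,
    by simpa using swap_apply_val_le_of_pathAdj hab (swap a b (σ⁻¹ x))⟩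

lemma SwapSeq.inv_apply_val_le_succ (hu : StrictPref u) (h : SwapSeq pathAdj u σ T)
    {x : Fin n} (hx : ((σ 0)⁻¹ x).val ≤ ((σ T)⁻¹ x).val) :
    ∀ m < T, ((σ m)⁻¹ x).val ≤ ((σ (m + 1))⁻¹ x).val :=
  le_succ_of_no_return (f := fun m ↦ ((σ m)⁻¹ x).val) (fun m hm ↦ (h m hm).inv_apply_val_le x)
    (fun _ _ _ h₁₂ h₂₃ h₃ he ↦
      congrArg Fin.val (h.inv_apply_eq_of_inv_apply_eq hu h₁₂ h₂₃ h₃ (Fin.ext he))) hx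

lemma le_iff_le_of_inv_apply_val_le {σ : Assignment n} {a b x : Fin n} (hab : pathAdj a b)
    (hx : (σ⁻¹ x).val ≤ ((σ * swap a b)⁻¹ x).val) :
    (σ⁻¹ x).val ≤ a.val ↔ (σ⁻¹ x).val ≤ b.val := by
  rw [mul_inv_rev, swap_inv, Perm.mul_apply] at hx
  generalize σ⁻¹ x = p at hx ⊢
  unfold pathAdj at hab
  rw [swap_apply_def] at hx
  split_ifs at hx <;> subst_vars <;> omega

lemma SwapSeq.exists_reflTransGen_of_frontier (h : SwapSeq pathAdj u σ T) (f : ℕ → ℕ)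
    (hf : ∀ m < T, f m ≤ f (m + 1))
    (hcross : ∀ m < T, ∀ a b, pathAdj a b → σ (m + 1) = σ m * swap a b →
      (f m ≤ a.val ↔ f m ≤ b.val))
    {m : ℕ} (hm : m ≤ T) :
    ∃ τ, ReflTransGen (fun τ₁ τ₂ ↦ SwapStep pathAdj u τ₁ τ₂ ∧
        ∀ i : Fin n, i.val < f 0 → τ₂ i = σ 0 i) (σ 0) τ ∧
      (∀ i : Fin n, i.val < f 0 → τ i = σ 0 i) ∧ ∀ i : Fin n, f m ≤ i.val → τ i = σ m i := by
  induction m with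
  | zero => exact ⟨σ 0, .refl, fun _ _ ↦ rfl, fun _ _ ↦ rfl⟩
  | succ m ih =>
    have hmT : m < T := hm
    obtain ⟨τ, hτ, hleft, hright⟩ := ih hmT.le
    obtain ⟨a, b, hab, ha, hb, hσ⟩ := h m hmT
    have hσi : ∀ i, σ (m + 1) i = σ m (swap a b i) := by simp [hσ]
    have hfm := hf m hmT
    have hf0 : f 0 ≤ f m := monotoneOn_Iic_of_le_succ hf (Nat.zero_le T) hmT.le (Nat.zero_le m)
    by_cases hka : f m ≤ a.val
    · have hkb : f m ≤ b.val := (hcross m hmT a b hab hσ).1 hka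
      have hleft' : ∀ i : Fin n, i.val < f 0 → (τ * swap a b) i = σ 0 i := fun i hi ↦ by
        rw [Perm.mul_apply, swap_apply_of_ne_of_ne (by rintro rfl; omega) (by rintro rfl; omega),
          hleft i hi]
      have hstep : SwapStep pathAdj u τ (τ * swap a b) :=
        ⟨a, b, hab, by rwa [hright a hka, hright b hkb], by rwa [hright a hka, hright b hkb], rfl⟩
      refine ⟨τ * swap a b, hτ.tail ⟨hstep, hleft'⟩, hleft', fun i hi ↦ ?_⟩
      rw [Perm.mul_apply, hσi, hright (swap a b i) (by rw [swap_apply_def]; split_ifs <;> omega)]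
    · have hkb : ¬ f m ≤ b.val := mt (hcross m hmT a b hab hσ).2 hka
      refine ⟨τ, hτ, hleft, fun i hi ↦ ?_⟩
      rw [hσi, swap_apply_of_ne_of_ne (by rintro rfl; omega) (by rintro rfl; omega),
        hright i (by omega)]

lemma exists_swapSeq_of_reflTransGen {P : Assignment n → Prop} {σ τ : Assignment n} (hσ : P σ)
    (h : ReflTransGen (fun τ₁ τ₂ ↦ SwapStep adj u τ₁ τ₂ ∧ P τ₂) σ τ) :
    ∃ t σseq, σseq 0 = σ ∧ SwapSeq adj u σseq t ∧ σseq t = τ ∧ ∀ m ≤ t, P (σseq m) := by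
  induction h with
  | refl => exact ⟨0, fun _ ↦ σ, rfl, fun m hm ↦ absurd hm m.not_lt_zero, rfl, fun _ _ ↦ hσ⟩
  | @tail _ τ' _ hstep ih =>
    obtain ⟨t, s, h0, hs, ht, hP⟩ := ih
    refine ⟨t + 1, fun m ↦ if m ≤ t then s m else τ', by simp [h0], fun m hm ↦ ?_, by simp,
      fun m hm ↦ ?_⟩
    · rcases (Nat.lt_succ_iff.mp hm).lt_or_eq with hm | rfl
      · simpa [hm.le, Nat.succ_le_of_lt hm] using hs m hm
      · simpa [ht] using hstep.1
    · by_cases hmt : m ≤ t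
      · simpa [hmt] using hP m hmt
      · simpa [hmt] using hstep.2

/-- 0-indexed: on a path under strict preferences, if object `o_l` is reachable
for agent `k` with `l ≤ k`, then there is a sequence of rational swaps ending with agent `k`
holding `o_l` in which no agent `i < l` ever participates in a swap (its held object stays
its initial endowment at every step). -/
theorem reachable_without_left_agents {n : ℕ}
    (u : Fin n → Fin n → ℕ) (hu : StrictPref u)
    (l k : Fin n) (hlk : l.val ≤ k.val)
    (h : ReachableObj pathAdj u k l) :
    ∃ t σseq, σseq 0 = 1 ∧ SwapSeq pathAdj u σseq t ∧ σseq t k = l ∧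
      ∀ m ≤ t, ∀ i : Fin n, i.val < l.val → σseq m i = i := by
  obtain ⟨T, σ, hσ0, hσ, hσT⟩ := h
  set p : ℕ → ℕ := fun m ↦ ((σ m)⁻¹ l).val
  have hp0 : p 0 = l.val := by simp only [p, hσ0]; rfl
  have hpT : p T = k.val := by simp [p, ← hσT]
  have hp : ∀ m < T, p m ≤ p (m + 1) :=
    hσ.inv_apply_val_le_succ hu (hp0.trans_le (hlk.trans hpT.ge))
  obtain ⟨τ, hτ, -, hright⟩ := hσ.exists_reflTransGen_of_frontier p hp
    (fun m hm a b hab hstep ↦ le_iff_le_of_inv_apply_val_le hab (hstep ▸ hp m hm)) le_rfl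
  obtain ⟨t, σseq, h0, hseq, ht, hleft⟩ := exists_swapSeq_of_reflTransGen (fun _ _ ↦ rfl) hτ
  refine ⟨t, σseq, h0.trans hσ0, hseq, ?_, fun m hm i hi ↦ ?_⟩
  · rw [ht, hright k hpT.le, hσT]
  · rw [hleft m hm i (hp0 ▸ hi), hσ0]
    rfl
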